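/- Let X and Y be Banach spaces such that X has type p, with 1 ≤ p ≤ 2, and let u : X → Y be a continuous linear operator. If u takes almost unconditionally summable sequences in X into members of ℓ_p⟨Y⟩, then the adjoint u* is absolutely p*-summing (equivalently, u is Cohen strongly p-summing). -/

import Mathlib

open MeasureTheory Finset Filter
open scoped ENNReal NNReal

noncomputable section

universe u v

/-- The `i`-th Rademacher function. -/
def rademacher (i : ℕ) (t : ℝ) : ℝ :=
  if Int.fract ((2 : ℝ) ^ i * t) < 1 / 2 then 1 else -1

/-- The Rademacher (`Rad`) norm of the first `m` terms of a sequence: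
`(∫_0^1 ‖∑_{i<m} r_i(t) x_i‖² dt)^{1/2}`. -/
def radNorm {Z : Type u} [NormedAddCommGroup Z] [NormedSpace ℝ Z] (m : ℕ) (x : ℕ → Z) : ℝ :=
  (∫ t in (0:ℝ)..1, ‖∑ i ∈ Finset.range m, rademacher i t • x i‖ ^ 2) ^ ((1:ℝ) / 2)

/-- Conjugate exponent in `ℝ≥0∞` (`conjExp p = p*`, `1/p + 1/p* = 1`). -/
def conjExp (p : ℝ≥0∞) : ℝ≥0∞ := (1 - p⁻¹)⁻¹

/-- Finite strong `ℓ_q` norm `‖(x_i)_{i<m}‖_q` (sup norm if `q = ∞`). -/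
def lpNormFin {Z : Type u} [NormedAddCommGroup Z] (q : ℝ≥0∞) (m : ℕ) (x : ℕ → Z) : ℝ :=
  if q = ∞ then ⨆ i : Fin m, ‖x (i : ℕ)‖
  else (∑ i ∈ Finset.range m, ‖x i‖ ^ q.toReal) ^ (1 / q.toReal)

/-- Finite weak `ℓ_q` norm `‖(x_i)_{i<m}‖_{w,q}`. -/
def weakNorm {Z : Type u} [NormedAddCommGroup Z] [NormedSpace ℝ Z] (q : ℝ≥0∞) (m : ℕ)
    (x : ℕ → Z) : ℝ :=
  if q = ∞ then ⨆ i : Fin m, ‖x (i : ℕ)‖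
  else ⨆ φ : {φ : Z →L[ℝ] ℝ // ‖φ‖ ≤ 1},
    (∑ i ∈ Finset.range m, |φ.1 (x i)| ^ q.toReal) ^ (1 / q.toReal)

/-- Membership in `Rad(Z)`: almost unconditionally summable sequences. -/
def MemRad {Z : Type u} [NormedAddCommGroup Z] [NormedSpace ℝ Z] (x : ℕ → Z) : Prop :=
  ∃ C, ∀ m, radNorm m x ≤ C

/-- Weakly `q`-summable sequences `ℓ_q^w(Z)`. -/
def MemWeakLp {Z : Type u} [NormedAddCommGroup Z] [NormedSpace ℝ Z] (q : ℝ≥0∞)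
    (x : ℕ → Z) : Prop :=
  ∃ C, ∀ m, weakNorm q m x ≤ C

/-- Absolutely `p`-summable sequences `ℓ_p(Z)` (bounded sequences if `p = ∞`). -/
def MemStrongLp {Z : Type u} [NormedAddCommGroup Z] (p : ℝ≥0∞) (x : ℕ → Z) : Prop :=
  if p = ∞ then ∃ C, ∀ i, ‖x i‖ ≤ C else Summable fun i => ‖x i‖ ^ p.toReal

/-- Cohen strongly `p`-summable sequences `ℓ_p⟨Z⟩`. -/
def MemCohen {Z : Type u} [NormedAddCommGroup Z] [NormedSpace ℝ Z] (p : ℝ≥0∞)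
    (y : ℕ → Z) : Prop :=
  ∀ φ : ℕ → (Z →L[ℝ] ℝ), MemWeakLp (conjExp p) φ → Summable fun i => |φ i (y i)|

/-- Almost `p`-summing operators. -/
def IsAlmostPSumming {Z : Type u} {W : Type v} [NormedAddCommGroup Z] [NormedSpace ℝ Z]
    [NormedAddCommGroup W] [NormedSpace ℝ W] (p : ℝ≥0∞) (u : Z →L[ℝ] W) : Prop :=
  ∃ C, 0 ≤ C ∧ ∀ m (x : ℕ → Z), radNorm m (fun i => u (x i)) ≤ C * weakNorm p m x

/-- The almost `p`-summing norm `π_{al.s.p}(u)`. -/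
def almostNorm {Z : Type u} {W : Type v} [NormedAddCommGroup Z] [NormedSpace ℝ Z]
    [NormedAddCommGroup W] [NormedSpace ℝ W] (p : ℝ≥0∞) (u : Z →L[ℝ] W) : ℝ :=
  sInf {C | 0 ≤ C ∧ ∀ m (x : ℕ → Z), radNorm m (fun i => u (x i)) ≤ C * weakNorm p m x}

/-- Absolutely `p`-summing operators (every operator is `∞`-summing by convention). -/
def IsPSumming {Z : Type u} {W : Type v} [NormedAddCommGroup Z] [NormedSpace ℝ Z]
    [NormedAddCommGroup W] [NormedSpace ℝ W] (p : ℝ≥0∞) (u : Z →L[ℝ] W) : Prop :=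
  if p = ∞ then True
  else ∀ x : ℕ → Z, MemWeakLp p x → Summable fun i => ‖u (x i)‖ ^ p.toReal

/-- Cohen strongly `q`-summing with constant `C`. -/
def IsCohenStrongWith {Z : Type u} {W : Type v} [NormedAddCommGroup Z] [NormedSpace ℝ Z]
    [NormedAddCommGroup W] [NormedSpace ℝ W] (q : ℝ≥0∞) (C : ℝ) (u : Z →L[ℝ] W) : Prop :=
  ∀ m (x : ℕ → Z) (φ : ℕ → (W →L[ℝ] ℝ)),
    ∑ i ∈ Finset.range m, |φ i (u (x i))| ≤ C * lpNormFin q m x * weakNorm (conjExp q) m φ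

/-- Cohen strongly `q`-summing operators. -/
def IsCohenStrong {Z : Type u} {W : Type v} [NormedAddCommGroup Z] [NormedSpace ℝ Z]
    [NormedAddCommGroup W] [NormedSpace ℝ W] (q : ℝ≥0∞) (u : Z →L[ℝ] W) : Prop :=
  ∃ C, 0 ≤ C ∧ IsCohenStrongWith q C u

/-- The Banach space adjoint `u* : W* → Z*`. -/
def adj {Z : Type u} {W : Type v} [NormedAddCommGroup Z] [NormedSpace ℝ Z]
    [NormedAddCommGroup W] [NormedSpace ℝ W] (u : Z →L[ℝ] W) :
    (W →L[ℝ] ℝ) →L[ℝ] (Z →L[ℝ] ℝ) :=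
  (ContinuousLinearMap.compSL Z W ℝ (RingHom.id ℝ) (RingHom.id ℝ)).flip u

/-- `Z` has type `p` with constant `C`. -/
def HasTypeWith (p : ℝ≥0∞) (C : ℝ) (Z : Type u) [NormedAddCommGroup Z] [NormedSpace ℝ Z] :
    Prop :=
  ∀ m (x : ℕ → Z), radNorm m x ≤ C * lpNormFin p m x

/-- `Z` has type `p`. -/
def HasTypeP (p : ℝ≥0∞) (Z : Type u) [NormedAddCommGroup Z] [NormedSpace ℝ Z] : Prop :=
  ∃ C, 0 ≤ C ∧ HasTypeWith p C Z

/-- The type-`p` constant `T_p(Z)`. -/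
def typeConst (p : ℝ≥0∞) (Z : Type u) [NormedAddCommGroup Z] [NormedSpace ℝ Z] : ℝ :=
  sInf {C | 0 ≤ C ∧ HasTypeWith p C Z}

/-- `Z` is an `L_p`-space with constant `lam`. -/
def IsLpSpaceWith (p : ℝ≥0∞) [Fact (1 ≤ p)] (lam : ℝ) (Z : Type u) [NormedAddCommGroup Z]
    [NormedSpace ℝ Z] : Prop :=
  ∀ E : Submodule ℝ Z, FiniteDimensional ℝ E →
    ∃ F : Submodule ℝ Z, E ≤ F ∧ FiniteDimensional ℝ F ∧
      ∃ v : F ≃L[ℝ] PiLp p (fun _ : Fin (Module.finrank ℝ F) => ℝ),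
        ‖(v : F →L[ℝ] PiLp p (fun _ : Fin (Module.finrank ℝ F) => ℝ))‖ *
          ‖(v.symm : PiLp p (fun _ : Fin (Module.finrank ℝ F) => ℝ) →L[ℝ] F)‖ ≤ lam

/-- `Z` is an `L_p`-space. -/
def IsLpSpace (p : ℝ≥0∞) [Fact (1 ≤ p)] (Z : Type u) [NormedAddCommGroup Z]
    [NormedSpace ℝ Z] : Prop :=
  ∃ lam : ℝ, 1 < lam ∧ IsLpSpaceWith p lam Z

/-- `Z` is isomorphic to a Hilbert space. -/
def IsomorphicToHilbert (Z : Type u) [NormedAddCommGroup Z] [NormedSpace ℝ Z] : Prop :=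
  ∃ ι : Type u, Nonempty (Z ≃L[ℝ] lp (fun _ : ι => ℝ) 2)

/-- `Z` is isomorphic to a closed subspace of some `L_r(μ)`. -/
def IsomorphicToClosedSubspaceLp (r : ℝ≥0∞) [Fact (1 ≤ r)] (Z : Type u)
    [NormedAddCommGroup Z] [NormedSpace ℝ Z] : Prop :=
  ∃ (Ω : Type) (mΩ : MeasurableSpace Ω) (μ : @MeasureTheory.Measure Ω mΩ)
    (S : Submodule ℝ (@MeasureTheory.Lp Ω ℝ mΩ _ r μ)),
    IsClosed (S : Set (@MeasureTheory.Lp Ω ℝ mΩ _ r μ)) ∧ Nonempty (Z ≃L[ℝ] S)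


/-!
If `u` were not Cohen strongly `p`-summing, homogeneity would give for every `n` a finite block
`(xᵢ, φᵢ)` with `‖x‖_p ≤ 2⁻ⁿ`, `‖φ‖_{w,p*} ≤ 2⁻ⁿ` and `∑ |φᵢ(u xᵢ)| > 1`. Laying all the blocks
out in a single sequence produces `x ∈ ℓ_p(X) ⊆ Rad(X)` (this is where type `p` enters) and a
weakly `p*`-summable `φ` with `∑ |φᵢ(u xᵢ)| = ∞`, contradicting the hypothesis on `u`.

The adjoint is then `p*`-summing by the easy half of Cohen's theorem: evaluating the Cohen
inequality at near-norming vectors of `u* φᵢ` with weights `‖u* φᵢ‖^(p* - 1)` bounds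
`∑ ‖u* φᵢ‖^p*` by `(C ‖φ‖_{w,p*})^p*`.
-/

lemma one_le_conjExp (p : ℝ≥0∞) : 1 ≤ conjExp p :=
  ENNReal.one_le_inv.mpr tsub_le_self

lemma holderConjugate_toReal_conjExp {p : ℝ≥0∞} (hp : p ≠ ∞) (hq : conjExp p ≠ ∞) :
    p.toReal.HolderConjugate (conjExp p).toReal := by
  have hp1 : p⁻¹ < 1 := by
    by_contra! h
    exact hq (by simp [conjExp, tsub_eq_zero_of_le h])
  have hpr : 1 < p.toReal := by
    simpa using (ENNReal.toReal_lt_toReal ENNReal.one_ne_top hp).mpr (ENNReal.inv_lt_one.mp hp1)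
  have hconj : (conjExp p).toReal = (1 - p.toReal⁻¹)⁻¹ := by
    rw [conjExp, ENNReal.toReal_inv, ENNReal.toReal_sub_of_le hp1.le ENNReal.one_ne_top,
      ENNReal.toReal_one, ENNReal.toReal_inv]
  simpa [hconj] using Real.HolderConjugate.inv_one_sub_inv (inv_pos.mpr (zero_lt_one.trans hpr))
    (inv_lt_one_of_one_lt₀ hpr)

lemma le_sum_rpow_rpow_one_div {ι : Type*} {s : Finset ι} {f : ι → ℝ} (hf : ∀ i ∈ s, 0 ≤ f i)
    {t : ℝ} (ht : 0 < t) {i : ι} (hi : i ∈ s) : f i ≤ (∑ j ∈ s, f j ^ t) ^ (1 / t) := by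
  have hft : ∀ j ∈ s, 0 ≤ f j ^ t := fun j hj => Real.rpow_nonneg (hf j hj) t
  rw [one_div, Real.le_rpow_inv_iff_of_pos (hf i hi) (sum_nonneg hft) ht]
  exact single_le_sum hft hi

section Norms

variable {Z : Type*} [NormedAddCommGroup Z]

lemma lpNormFin_nonneg (q : ℝ≥0∞) (m : ℕ) (x : ℕ → Z) : 0 ≤ lpNormFin q m x := by
  unfold lpNormFin
  split_ifs
  · exact Real.iSup_nonneg fun _ => norm_nonneg _
  · positivity

lemma lpNormFin_top (m : ℕ) (x : ℕ → Z) : lpNormFin ∞ m x = ⨆ i : Fin m, ‖x i‖ := if_pos rfl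

lemma lpNormFin_of_ne_top {q : ℝ≥0∞} (hq : q ≠ ∞) (m : ℕ) (x : ℕ → Z) :
    lpNormFin q m x = (∑ i ∈ range m, ‖x i‖ ^ q.toReal) ^ (1 / q.toReal) := if_neg hq

lemma norm_le_lpNormFin {q : ℝ≥0∞} (hq : q ≠ 0) {m i : ℕ} (hi : i < m) (x : ℕ → Z) :
    ‖x i‖ ≤ lpNormFin q m x := by
  rcases eq_or_ne q ∞ with rfl | hq'
  · rw [lpNormFin_top]
    exact le_ciSup (f := fun j : Fin m => ‖x j‖) (Set.finite_range _).bddAbove ⟨i, hi⟩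
  · rw [lpNormFin_of_ne_top hq']
    exact le_sum_rpow_rpow_one_div (fun _ _ => norm_nonneg _) (ENNReal.toReal_pos hq hq')
      (mem_range.mpr hi)

lemma lpNormFin_mono {Z' : Type*} [NormedAddCommGroup Z'] (q : ℝ≥0∞) {m : ℕ} {x : ℕ → Z}
    {y : ℕ → Z'} (h : ∀ i < m, ‖x i‖ ≤ ‖y i‖) : lpNormFin q m x ≤ lpNormFin q m y := by
  rcases eq_or_ne q ∞ with rfl | hq
  · simp only [lpNormFin_top]
    exact Real.iSup_le (fun i => (h i i.2).trans
      (le_ciSup (f := fun j : Fin m => ‖y j‖) (Set.finite_range _).bddAbove i))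
      (Real.iSup_nonneg fun _ => norm_nonneg _)
  · simp only [lpNormFin_of_ne_top hq]
    refine Real.rpow_le_rpow (by positivity) (sum_le_sum fun i hi => ?_) (by positivity)
    exact Real.rpow_le_rpow (norm_nonneg _) (h i (mem_range.mp hi)) ENNReal.toReal_nonneg

lemma lpNormFin_smul [NormedSpace ℝ Z] {q : ℝ≥0∞} (hq : q ≠ 0) (m : ℕ) (c : ℝ) (x : ℕ → Z) :
    lpNormFin q m (fun i => c • x i) = |c| * lpNormFin q m x := by
  rcases eq_or_ne q ∞ with rfl | hq'
  · simp only [lpNormFin_top, norm_smul, Real.norm_eq_abs, Real.mul_iSup_of_nonneg (abs_nonneg c)]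
  · have ht := (ENNReal.toReal_pos hq hq').ne'
    simp only [lpNormFin_of_ne_top hq', norm_smul, Real.norm_eq_abs,
      Real.mul_rpow (abs_nonneg c) (norm_nonneg _), ← mul_sum]
    rw [Real.mul_rpow (by positivity) (by positivity), ← Real.rpow_mul (abs_nonneg c),
      mul_one_div_cancel ht, Real.rpow_one]

lemma sum_rpow_le_of_lpNormFin_le {q : ℝ≥0∞} (hq : q ≠ ∞) (hq0 : q ≠ 0) {m : ℕ} {x : ℕ → Z}
    {ε : ℝ} (h : lpNormFin q m x ≤ ε) : ∑ i ∈ range m, ‖x i‖ ^ q.toReal ≤ ε ^ q.toReal := by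
  rw [lpNormFin_of_ne_top hq, one_div] at h
  exact (Real.rpow_inv_le_iff_of_pos (by positivity) ((lpNormFin_nonneg q m x).trans
    (by rwa [lpNormFin_of_ne_top hq, one_div])) (ENNReal.toReal_pos hq0 hq)).mp h

end Norms

section WeakNorm

variable {Z : Type*} [NormedAddCommGroup Z] [NormedSpace ℝ Z]

lemma weakNorm_top (m : ℕ) (x : ℕ → Z) : weakNorm ∞ m x = lpNormFin ∞ m x := by
  rw [weakNorm, if_pos rfl, lpNormFin_top]

lemma weakNorm_of_ne_top {q : ℝ≥0∞} (hq : q ≠ ∞) (m : ℕ) (x : ℕ → Z) :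
    weakNorm q m x = ⨆ Ψ : {Ψ : Z →L[ℝ] ℝ // ‖Ψ‖ ≤ 1}, lpNormFin q m (fun i => Ψ.1 (x i)) := by
  simp only [weakNorm, if_neg hq, lpNormFin_of_ne_top hq, Real.norm_eq_abs]

lemma weakNorm_nonneg (q : ℝ≥0∞) (m : ℕ) (x : ℕ → Z) : 0 ≤ weakNorm q m x := by
  rcases eq_or_ne q ∞ with rfl | hq
  · exact weakNorm_top m x ▸ lpNormFin_nonneg ∞ m x
  · exact weakNorm_of_ne_top hq m x ▸ Real.iSup_nonneg fun _ => lpNormFin_nonneg _ _ _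

lemma lpNormFin_apply_le_weakNorm {q : ℝ≥0∞} (hq : q ≠ ∞) (m : ℕ) (x : ℕ → Z)
    {Ψ : Z →L[ℝ] ℝ} (hΨ : ‖Ψ‖ ≤ 1) : lpNormFin q m (fun i => Ψ (x i)) ≤ weakNorm q m x := by
  have hle : ∀ Φ : {Φ : Z →L[ℝ] ℝ // ‖Φ‖ ≤ 1},
      lpNormFin q m (fun i => Φ.1 (x i)) ≤ lpNormFin q m x := fun Φ =>
    lpNormFin_mono q fun i _ => Φ.1.le_of_opNorm_le Φ.2 (x i) |>.trans_eq (one_mul _)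
  rw [weakNorm_of_ne_top hq]
  exact le_ciSup (f := fun Φ : {Φ : Z →L[ℝ] ℝ // ‖Φ‖ ≤ 1} => lpNormFin q m (fun i => Φ.1 (x i)))
    ⟨_, Set.forall_mem_range.mpr hle⟩ ⟨Ψ, hΨ⟩

lemma norm_le_weakNorm {q : ℝ≥0∞} (hq : q ≠ 0) {m i : ℕ} (hi : i < m) (x : ℕ → Z) :
    ‖x i‖ ≤ weakNorm q m x := by
  rcases eq_or_ne q ∞ with rfl | hq'
  · exact weakNorm_top m x ▸ norm_le_lpNormFin hq hi x
  · obtain ⟨Ψ, hΨ, hΨx⟩ := exists_dual_vector'' ℝ (x i)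
    calc ‖x i‖ = ‖Ψ (x i)‖ := by simp [hΨx]
      _ ≤ lpNormFin q m (fun j => Ψ (x j)) := norm_le_lpNormFin hq hi (fun j => Ψ (x j))
      _ ≤ weakNorm q m x := lpNormFin_apply_le_weakNorm hq' m x hΨ

lemma weakNorm_smul {q : ℝ≥0∞} (hq : q ≠ 0) (m : ℕ) (c : ℝ) (x : ℕ → Z) :
    weakNorm q m (fun i => c • x i) = |c| * weakNorm q m x := by
  rcases eq_or_ne q ∞ with rfl | hq'
  · simp only [weakNorm_top, lpNormFin_smul hq]
  · rw [weakNorm_of_ne_top hq', weakNorm_of_ne_top hq', Real.mul_iSup_of_nonneg (abs_nonneg c)]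
    refine congrArg iSup (funext fun Ψ => ?_)
    simp only [map_smul]
    exact lpNormFin_smul hq m c (fun i => Ψ.1 (x i))

end WeakNorm

lemma sum_rpow_le_of_forall_sum_mul_le {p : ℝ≥0∞} {s : ℝ} (hps : p.toReal.HolderConjugate s)
    {m : ℕ} {b : ℕ → ℝ} (hb : ∀ i, 0 ≤ b i) {K : ℝ} (hK : 0 ≤ K)
    (h : ∀ a : ℕ → ℝ, (∀ i, 0 ≤ a i) → ∑ i ∈ range m, a i * b i ≤ K * lpNormFin p m a) :
    ∑ i ∈ range m, b i ^ s ≤ K ^ s := by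
  have hp : p ≠ ∞ := by rintro rfl; exact hps.ne_zero (by simp)
  set S := ∑ i ∈ range m, b i ^ s
  have hS0 : 0 ≤ S := sum_nonneg fun i _ => Real.rpow_nonneg (hb i) s
  have hab : ∀ i, b i ^ (s - 1) * b i = b i ^ s := fun i => by
    rw [← Real.rpow_add_one' (hb i) (by linarith [hps.symm.sub_one_pos]), sub_add_cancel]
  have har : ∀ i, ‖b i ^ (s - 1)‖ ^ p.toReal = b i ^ s := fun i => by
    rw [Real.norm_of_nonneg (Real.rpow_nonneg (hb i) _), ← Real.rpow_mul (hb i),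
      hps.symm.sub_one_mul_conj]
  -- testing against `b ^ (s - 1)`, the equality case of Hölder's inequality
  have key : S ≤ K * S ^ (1 / p.toReal) := by
    simpa only [hab, lpNormFin_of_ne_top hp, har] using
      h (fun i => b i ^ (s - 1)) fun i => Real.rpow_nonneg (hb i) _
  rcases hS0.eq_or_lt with hS | hS
  · rw [← hS]
    positivity
  have hsplit : S ^ (1 / s) * S ^ (1 / p.toReal) = S := by
    rw [← Real.rpow_add hS, add_comm, hps.one_div_add_one_div, div_one, Real.rpow_one]
  have hle : S ^ (1 / s) ≤ K :=
    le_of_mul_le_mul_right (hsplit.trans_le key) (Real.rpow_pos_of_pos hS _)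
  rwa [one_div, Real.rpow_inv_le_iff_of_pos hS0 hK hps.symm.pos] at hle

/-- Concatenation of the finite blocks `x n 0, …, x n (M n - 1)`, indexed along `ℕ ≃ ℕ × ℕ`. -/
def blockSeq {Z : Type*} [Zero Z] (M : ℕ → ℕ) (x : ℕ → ℕ → Z) (k : ℕ) : Z :=
  if (Nat.unpair k).2 < M (Nat.unpair k).1 then x (Nat.unpair k).1 (Nat.unpair k).2 else 0

lemma apply_blockSeq {Z Z' : Type*} [Zero Z] [Zero Z'] {f : Z → Z'} (hf : f 0 = 0) (M : ℕ → ℕ)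
    (x : ℕ → ℕ → Z) (k : ℕ) : f (blockSeq M x k) = blockSeq M (fun n i => f (x n i)) k := by
  unfold blockSeq
  split_ifs <;> simp [hf]

lemma blockSeq_pair {Z : Type*} [Zero Z] (M : ℕ → ℕ) (x : ℕ → ℕ → Z) (n i : ℕ) :
    blockSeq M x (Nat.pair n i) = if i < M n then x n i else 0 := by
  simp [blockSeq]

lemma sum_range_blockSeq_le {g : ℕ → ℕ → ℝ} (hg : ∀ n i, 0 ≤ g n i) (M : ℕ → ℕ) (m : ℕ) :
    ∑ k ∈ range m, blockSeq M g k ≤ ∑ n ∈ range m, ∑ i ∈ range (M n), g n i := by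
  set G : ℕ × ℕ → ℝ := fun p => if p.2 < M p.1 then g p.1 p.2 else 0
  have hG : ∀ p, 0 ≤ G p := fun p => by dsimp only [G]; split_ifs <;> simp [hg]
  calc ∑ k ∈ range m, blockSeq M g k = ∑ k ∈ range m, G (Nat.unpair k) := rfl
    _ = ∑ p ∈ (range m).image Nat.unpair, G p :=
        (sum_image fun _ _ _ _ h => Nat.pairEquiv.symm.injective h).symm
    _ ≤ ∑ p ∈ range m ×ˢ range m, G p := by
        refine sum_le_sum_of_subset_of_nonneg (fun p hp => ?_) fun p _ _ => hG p
        obtain ⟨k, hk, rfl⟩ := mem_image.mp hp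
        have hk := mem_range.mp hk
        exact mem_product.mpr ⟨mem_range.mpr ((Nat.unpair_left_le k).trans_lt hk),
          mem_range.mpr ((Nat.unpair_right_le k).trans_lt hk)⟩
    _ = ∑ n ∈ range m, ∑ i ∈ (range m).filter (· < M n), g n i := by
        rw [sum_product]
        simp only [G, sum_filter]
    _ ≤ ∑ n ∈ range m, ∑ i ∈ range (M n), g n i := by
        refine sum_le_sum fun n _ => sum_le_sum_of_subset_of_nonneg (fun i hi => ?_)
          fun i _ _ => hg n i
        exact mem_range.mpr (mem_filter.mp hi).2

lemma summable_sum_of_summable_blockSeq {g : ℕ → ℕ → ℝ} (hg : ∀ n i, 0 ≤ g n i) {M : ℕ → ℕ}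
    (h : Summable (blockSeq M g)) : Summable fun n => ∑ i ∈ range (M n), g n i := by
  have hprod : Summable (blockSeq M g ∘ Nat.pairEquiv) := Nat.pairEquiv.summable_iff.mpr h
  have hterm : ∀ n i, (blockSeq M g ∘ Nat.pairEquiv) (n, i) = if i < M n then g n i else 0 :=
    blockSeq_pair M g
  refine ((summable_prod_of_nonneg fun ⟨n, i⟩ => ?_).mp hprod).2.congr fun n => ?_
  · simp only [hterm]
    rw [tsum_eq_sum fun i hi => if_neg fun h => hi (mem_range.mpr h)]
    exact sum_congr rfl fun i hi => if_pos (mem_range.mp hi)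
  · rw [Pi.zero_apply, hterm]
    split_ifs <;> simp [hg]

lemma lpNormFin_blockSeq_le {Z : Type*} [NormedAddCommGroup Z] {q : ℝ≥0∞} (hq : 1 ≤ q)
    {M : ℕ → ℕ} {x : ℕ → ℕ → Z} (hx : ∀ n, lpNormFin q (M n) (x n) ≤ (1 / 2) ^ n) (m : ℕ) :
    lpNormFin q m (blockSeq M x) ≤ 2 := by
  have hq0 : q ≠ 0 := (zero_lt_one.trans_le hq).ne'
  have hhalf : ∀ n : ℕ, ((1 : ℝ) / 2) ^ n ≤ 1 := fun n => pow_le_one₀ (by norm_num) (by norm_num)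
  rcases eq_or_ne q ∞ with rfl | hq'
  · rw [lpNormFin_top]
    refine Real.iSup_le (fun k => ?_) zero_le_two
    unfold blockSeq
    split_ifs with h
    · exact ((norm_le_lpNormFin hq0 h _).trans ((hx _).trans (hhalf _))).trans one_le_two
    · simp
  have ht : 1 ≤ q.toReal := by simpa using ENNReal.toReal_mono hq' hq
  have hrow : ∀ n, ∑ i ∈ range (M n), ‖x n i‖ ^ q.toReal ≤ (1 / 2) ^ n := fun n =>
    (sum_rpow_le_of_lpNormFin_le hq' hq0 (hx n)).trans
      (Real.rpow_le_self_of_le_one (by positivity) (hhalf n) ht)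
  have hsum : ∑ k ∈ range m, ‖blockSeq M x k‖ ^ q.toReal ≤ 2 := calc
    _ = ∑ k ∈ range m, blockSeq M (fun n i => ‖x n i‖ ^ q.toReal) k :=
        sum_congr rfl fun k _ => apply_blockSeq (f := fun z : Z => ‖z‖ ^ q.toReal)
          (by simp [Real.zero_rpow (zero_lt_one.trans_le ht).ne']) M x k
    _ ≤ ∑ n ∈ range m, ∑ i ∈ range (M n), ‖x n i‖ ^ q.toReal :=
        sum_range_blockSeq_le (fun _ _ => by positivity) M m
    _ ≤ ∑ n ∈ range m, (1 / 2 : ℝ) ^ n := sum_le_sum fun n _ => hrow n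
    _ ≤ 2 := sum_geometric_two_le m
  rw [lpNormFin_of_ne_top hq']
  calc _ ≤ (2 : ℝ) ^ (1 / q.toReal) := Real.rpow_le_rpow (by positivity) hsum (by positivity)
    _ ≤ 2 := Real.rpow_le_self_of_one_le one_le_two
        ((div_le_one (zero_lt_one.trans_le ht)).mpr ht)

lemma weakNorm_blockSeq_le {Z : Type*} [NormedAddCommGroup Z] [NormedSpace ℝ Z] {q : ℝ≥0∞}
    (hq : 1 ≤ q) {M : ℕ → ℕ} {x : ℕ → ℕ → Z} (hx : ∀ n, weakNorm q (M n) (x n) ≤ (1 / 2) ^ n)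
    (m : ℕ) : weakNorm q m (blockSeq M x) ≤ 2 := by
  rcases eq_or_ne q ∞ with rfl | hq'
  · rw [weakNorm_top]
    exact lpNormFin_blockSeq_le hq (fun n => weakNorm_top (M n) (x n) ▸ hx n) m
  rw [weakNorm_of_ne_top hq']
  refine Real.iSup_le (fun Ψ => ?_) zero_le_two
  have hΨ : (fun k => Ψ.1 (blockSeq M x k)) = blockSeq M (fun n i => Ψ.1 (x n i)) :=
    funext (apply_blockSeq (map_zero Ψ.1) M x)
  rw [hΨ]
  exact lpNormFin_blockSeq_le hq
    (fun n => (lpNormFin_apply_le_weakNorm hq' (M n) (x n) Ψ.2).trans (hx n)) m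

section Operators

variable {X Y : Type*} [NormedAddCommGroup X] [NormedSpace ℝ X] [NormedAddCommGroup Y]
  [NormedSpace ℝ Y]

lemma sum_abs_apply_le_card_mul {p q : ℝ≥0∞} (hp : p ≠ 0) (hq : q ≠ 0) (u : X →L[ℝ] Y) (m : ℕ)
    (x : ℕ → X) (φ : ℕ → Y →L[ℝ] ℝ) :
    ∑ i ∈ range m, |φ i (u (x i))| ≤ m * (‖u‖ * lpNormFin p m x * weakNorm q m φ) := by
  calc ∑ i ∈ range m, |φ i (u (x i))|
      ≤ ∑ i ∈ range m, ‖u‖ * lpNormFin p m x * weakNorm q m φ := sum_le_sum fun i hi => by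
        have hi := mem_range.mp hi
        calc |φ i (u (x i))| ≤ ‖φ i‖ * (‖u‖ * ‖x i‖) :=
              (φ i).le_opNorm_of_le (u.le_opNorm (x i))
          _ ≤ weakNorm q m φ * (‖u‖ * lpNormFin p m x) := by
              refine mul_le_mul (norm_le_weakNorm hq hi φ) ?_ (by positivity)
                (weakNorm_nonneg q m φ)
              exact mul_le_mul_of_nonneg_left (norm_le_lpNormFin hp hi x) (norm_nonneg u)
          _ = ‖u‖ * lpNormFin p m x * weakNorm q m φ := by ring
    _ = m * (‖u‖ * lpNormFin p m x * weakNorm q m φ) := by simp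

lemma exists_block_of_not_isCohenStrong {p : ℝ≥0∞} (hp : p ≠ 0) {u : X →L[ℝ] Y}
    (h : ¬ IsCohenStrong p u) {ε : ℝ} (hε : 0 < ε) :
    ∃ (M : ℕ) (x : ℕ → X) (φ : ℕ → Y →L[ℝ] ℝ), lpNormFin p M x ≤ ε ∧
      weakNorm (conjExp p) M φ ≤ ε ∧ 1 < ∑ i ∈ range M, |φ i (u (x i))| := by
  have hq : conjExp p ≠ 0 := (zero_lt_one.trans_le (one_le_conjExp p)).ne'
  obtain ⟨M, x, φ, hlt⟩ : ∃ (M : ℕ) (x : ℕ → X) (φ : ℕ → Y →L[ℝ] ℝ),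
      ε⁻¹ ^ 2 * lpNormFin p M x * weakNorm (conjExp p) M φ < ∑ i ∈ range M, |φ i (u (x i))| := by
    simp only [IsCohenStrong, IsCohenStrongWith, not_exists, not_and, not_forall, not_le] at h
    exact h _ (by positivity)
  set L := lpNormFin p M x
  set W := weakNorm (conjExp p) M φ
  have hL0 : 0 ≤ L := lpNormFin_nonneg p M x
  have hW0 : 0 ≤ W := weakNorm_nonneg (conjExp p) M φ
  have hLW : 0 < L * W := by
    by_contra! hLW
    have hLW0 : L * W = 0 := le_antisymm hLW (mul_nonneg hL0 hW0)
    have hsum : _ ≤ M * (‖u‖ * L * W) := sum_abs_apply_le_card_mul hp hq u M x φ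
    rw [mul_assoc ‖u‖, hLW0, mul_zero, mul_zero] at hsum
    rw [mul_assoc _ L, hLW0, mul_zero] at hlt
    linarith
  have hL : 0 < L := hL0.lt_of_ne fun h => by simp [← h] at hLW
  have hW : 0 < W := hW0.lt_of_ne fun h => by simp [← h] at hLW
  refine ⟨M, fun i => (ε / L) • x i, fun i => (ε / W) • φ i, ?_, ?_, ?_⟩
  · rw [lpNormFin_smul hp, abs_of_pos (by positivity), div_mul_cancel₀ _ hL.ne']
  · rw [weakNorm_smul hq, abs_of_pos (by positivity), div_mul_cancel₀ _ hW.ne']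
  · calc (1 : ℝ) = ε / L * (ε / W) * (ε⁻¹ ^ 2 * L * W) := by field_simp
      _ < ε / L * (ε / W) * ∑ i ∈ range M, |φ i (u (x i))| :=
          mul_lt_mul_of_pos_left hlt (by positivity)
      _ = ∑ i ∈ range M, |((ε / W) • φ i) (u ((ε / L) • x i))| := by
          rw [mul_sum]
          refine sum_congr rfl fun i _ => ?_
          rw [map_smul, smul_apply, map_smul, smul_eq_mul, smul_eq_mul,
            abs_mul, abs_mul, abs_of_pos (by positivity : 0 < ε / W),
            abs_of_pos (by positivity : 0 < ε / L)]
          ring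

theorem isCohenStrong_of_forall_memRad {p : ℝ≥0∞} (hp : 1 ≤ p) (hX : HasTypeP p X)
    {u : X →L[ℝ] Y} (hu : ∀ x : ℕ → X, MemRad x → MemCohen p (fun i => u (x i))) :
    IsCohenStrong p u := by
  by_contra h
  choose M x φ hx hφ hsum using fun n : ℕ =>
    exists_block_of_not_isCohenStrong (zero_lt_one.trans_le hp).ne' h (pow_pos one_half_pos n)
  obtain ⟨C, hC0, hC⟩ := hX
  have hrad : MemRad (blockSeq M x) :=
    ⟨C * 2, fun m => (hC m _).trans (mul_le_mul_of_nonneg_left (lpNormFin_blockSeq_le hp hx m) hC0)⟩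
  have hweak : MemWeakLp (conjExp p) (blockSeq M φ) :=
    ⟨2, weakNorm_blockSeq_le (one_le_conjExp p) hφ⟩
  have hterm : (fun k => |blockSeq M φ k (u (blockSeq M x k))|) =
      blockSeq M (fun n i => |φ n i (u (x n i))|) := by
    ext k
    unfold blockSeq
    split_ifs <;> simp
  obtain ⟨n, hn⟩ := ((summable_sum_of_summable_blockSeq (fun _ _ => abs_nonneg _)
    (hterm ▸ hu _ hrad _ hweak)).tendsto_atTop_zero.eventually (gt_mem_nhds one_pos)).exists
  exact (hsum n).not_gt hn

lemma sum_mul_norm_adj_le {p : ℝ≥0∞} {C : ℝ} (hC0 : 0 ≤ C) {u : X →L[ℝ] Y}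
    (hC : IsCohenStrongWith p C u) (m : ℕ) (φ : ℕ → Y →L[ℝ] ℝ) (a : ℕ → ℝ)
    (ha : ∀ i, 0 ≤ a i) :
    ∑ i ∈ range m, a i * ‖adj u (φ i)‖ ≤ C * weakNorm (conjExp p) m φ * lpNormFin p m a := by
  refine le_of_forall_pos_le_add fun δ hδ => ?_
  set A := ∑ i ∈ range m, a i
  have hA : 0 ≤ A := sum_nonneg fun i _ => ha i
  set ε := δ / (A + 1)
  have hε : 0 < ε := by positivity
  have hx : ∀ i, ∃ x : X, ‖x‖ ≤ 1 ∧ ‖adj u (φ i)‖ ≤ |φ i (u x)| + ε := fun i => by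
    obtain ⟨x, hx1, hx2⟩ :=
      (adj u (φ i)).exists_lt_apply_of_lt_opNorm (sub_lt_self ‖adj u (φ i)‖ hε)
    exact ⟨x, hx1.le, by simpa [adj, ← Real.norm_eq_abs] using (sub_lt_iff_lt_add.mp hx2).le⟩
  choose x hx1 hx2 using hx
  have hlp : lpNormFin p m (fun i => a i • x i) ≤ lpNormFin p m a :=
    lpNormFin_mono p fun i _ => by
      rw [norm_smul]
      exact mul_le_of_le_one_right (norm_nonneg _) (hx1 i)
  calc ∑ i ∈ range m, a i * ‖adj u (φ i)‖
      ≤ ∑ i ∈ range m, (|φ i (u (a i • x i))| + ε * a i) := sum_le_sum fun i _ => by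
        rw [map_smul, map_smul, smul_eq_mul, abs_mul, abs_of_nonneg (ha i)]
        linarith [mul_le_mul_of_nonneg_left (hx2 i) (ha i)]
    _ = ∑ i ∈ range m, |φ i (u (a i • x i))| + ε * A := by rw [sum_add_distrib, mul_sum]
    _ ≤ C * weakNorm (conjExp p) m φ * lpNormFin p m a + δ := by
        gcongr
        · calc _ ≤ C * lpNormFin p m (fun i => a i • x i) * weakNorm (conjExp p) m φ :=
                hC m _ φ
            _ ≤ C * lpNormFin p m a * weakNorm (conjExp p) m φ := by
                gcongr
                exact weakNorm_nonneg _ _ _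
            _ = _ := by ring
        · calc ε * A ≤ ε * (A + 1) := by gcongr; linarith
            _ = δ := div_mul_cancel₀ δ (by positivity)

theorem IsCohenStrong.isPSumming_adj {p : ℝ≥0∞} (hp : p ≠ ∞) {u : X →L[ℝ] Y}
    (h : IsCohenStrong p u) : IsPSumming (conjExp p) (adj u) := by
  by_cases hq : conjExp p = ∞
  · simp [IsPSumming, hq]
  rw [IsPSumming, if_neg hq]
  have hps := holderConjugate_toReal_conjExp hp hq
  rintro φ ⟨W, hW⟩
  obtain ⟨C, hC0, hC⟩ := h
  refine summable_of_sum_range_le (c := (C * W) ^ (conjExp p).toReal)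
    (fun i => by positivity) fun m => ?_
  have hWm := weakNorm_nonneg (conjExp p) m φ
  calc _ ≤ (C * weakNorm (conjExp p) m φ) ^ (conjExp p).toReal :=
        sum_rpow_le_of_forall_sum_mul_le hps (fun i => norm_nonneg _) (by positivity)
          (sum_mul_norm_adj_le hC0 hC m φ)
    _ ≤ (C * W) ^ (conjExp p).toReal :=
        Real.rpow_le_rpow (by positivity) (by gcongr; exact hW m) hps.symm.nonneg

end Operators

theorem stmt3_general {X : Type u} {Y : Type v} [NormedAddCommGroup X] [NormedSpace ℝ X]
    [NormedAddCommGroup Y] [NormedSpace ℝ Y]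
    (p : ℝ≥0∞) (hp1 : 1 ≤ p) (hp2 : p ≤ 2) (hX : HasTypeP p X) (u : X →L[ℝ] Y)
    (hu : ∀ x : ℕ → X, MemRad x → MemCohen p (fun i => u (x i))) :
    IsPSumming (conjExp p) (adj u) ∧ IsCohenStrong p u := by
  have hcohen : IsCohenStrong p u := isCohenStrong_of_forall_memRad hp1 hX hu
  exact ⟨hcohen.isPSumming_adj (ne_top_of_le_ne_top ENNReal.ofNat_ne_top hp2), hcohen⟩

/-- If `X` has type `p` (`1 ≤ p ≤ 2`) and `u` maps almost unconditionally
summable sequences into `ℓ_p⟨Y⟩`, then `u*` is `p*`-summing (equivalently, `u` is Cohen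
strongly `p`-summing). -/
theorem stmt3 {X : Type u} {Y : Type v} [NormedAddCommGroup X] [NormedSpace ℝ X]
    [CompleteSpace X] [NormedAddCommGroup Y] [NormedSpace ℝ Y] [CompleteSpace Y]
    (p : ℝ≥0∞) (hp1 : 1 ≤ p) (hp2 : p ≤ 2) (hX : HasTypeP p X) (u : X →L[ℝ] Y)
    (hu : ∀ x : ℕ → X, MemRad x → MemCohen p (fun i => u (x i))) :
    IsPSumming (conjExp p) (adj u) ∧ IsCohenStrong p u :=
  stmt3_general p hp1 hp2 hX u hu
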